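/- arXiv:1501.02978 — 2 statements merged into one kernel-verified Lean document; each statement's English description precedes it below -/
import Mathlib

section
/- Let A be a finite-dimensional algebra and M an indecomposable non-projective Gorenstein-projective A-module. Then the syzygy Ω(M) is also an indecomposable non-projective Gorenstein-projective A-module. -/
universe u v w

/-- A witness that `M` is Gorenstein-projective: a totally acyclic complex of
finite-dimensional projective `A`-modules having `M` as a cocycle. -/
structure GPWitness (k : Type u) (A : Type v) (M : Type w) [Field k] [Ring A] [Algebra k A]
    [AddCommGroup M] [Module A M] : Type (max v (w + 1)) where
  P : ℤ → Type w
  [acg : ∀ n, AddCommGroup (P n)]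
  [mod : ∀ n, Module A (P n)]
  proj : ∀ n, Module.Projective A (P n)
  fin : ∀ n, Module.Finite A (P n)
  d : ∀ n, P n →ₗ[A] P (n + 1)
  ex : ∀ n, Function.Exact (d n) (d (n + 1))
  dualEx : ∀ n, Function.Exact
    (fun f : P (n + 1 + 1) →ₗ[A] A => (f.comp (d (n + 1)) : P (n + 1) →ₗ[A] A))
    (fun f : P (n + 1) →ₗ[A] A => (f.comp (d n) : P n →ₗ[A] A))
  cocycle : Nonempty (M ≃ₗ[A] LinearMap.ker (d 0))

/-- `M` is a Gorenstein-projective `A`-module. -/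
def IsGorensteinProjective (k : Type u) (A : Type v) (M : Type w) [Field k] [Ring A]
    [Algebra k A] [AddCommGroup M] [Module A M] : Prop :=
  Nonempty (GPWitness k A M)

/-- `π : P → M` is a projective cover: `P` is projective, `π` is surjective and
its kernel is superfluous in `P`. -/
def IsProjectiveCover (A : Type v) [Ring A] {P M : Type w} [AddCommGroup P] [Module A P]
    [AddCommGroup M] [Module A M] (π : P →ₗ[A] M) : Prop :=
  Module.Projective A P ∧ Function.Surjective π ∧
    ∀ N : Submodule A P, N ⊔ LinearMap.ker π = ⊤ → N = ⊤

/-- `M` is an indecomposable module: nonzero, and any direct sum decomposition is trivial. -/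
def IsIndecomposable (A : Type v) (M : Type w) [Ring A] [AddCommGroup M] [Module A M] : Prop :=
  (∃ x : M, x ≠ 0) ∧ ∀ N N' : Submodule A M, IsCompl N N' → N = ⊥ ∨ N' = ⊥

/-- A witness that `X` is a (first) syzygy of `Y`. -/
structure SyzygyWitness (A : Type v) (X Y : Type w) [Ring A] [AddCommGroup X] [Module A X]
    [AddCommGroup Y] [Module A Y] : Type (max v (w + 1)) where
  P : Type w
  [acg : AddCommGroup P]
  [mod : Module A P]
  π : P →ₗ[A] Y
  cover : IsProjectiveCover A π
  iso : Nonempty (X ≃ₗ[A] LinearMap.ker π)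

/-- `X` is a syzygy `Ω(Y)` of `Y`. -/
def IsSyzygyOf (A : Type v) (X Y : Type w) [Ring A] [AddCommGroup X] [Module A X]
    [AddCommGroup Y] [Module A Y] : Prop :=
  Nonempty (SyzygyWitness A X Y)

/-- A factorization of `f` through a projective module. -/
structure ProjFactorization (A : Type v) {X Y : Type w} [Ring A] [AddCommGroup X] [Module A X]
    [AddCommGroup Y] [Module A Y] (f : X →ₗ[A] Y) : Type (max v (w + 1)) where
  Q : Type w
  [acg : AddCommGroup Q]
  [mod : Module A Q]
  proj : Module.Projective A Q
  g : X →ₗ[A] Q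
  h : Q →ₗ[A] Y
  fac : f = h.comp g

/-- `f` factors through a projective module. -/
def FactorsThroughProjective (A : Type v) {X Y : Type w} [Ring A] [AddCommGroup X] [Module A X]
    [AddCommGroup Y] [Module A Y] (f : X →ₗ[A] Y) : Prop :=
  Nonempty (ProjFactorization A f)

/-- An injective coresolution of `M` of length at most `n`. -/
structure InjCoresWitness (R : Type v) (M : Type w) [Ring R] [AddCommGroup M] [Module R M]
    (n : ℕ) : Type (max v (w + 1)) where
  C : ℕ → Type w
  [acg : ∀ i, AddCommGroup (C i)]
  [mod : ∀ i, Module R (C i)]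
  inj : ∀ i, Module.Injective R (C i)
  ε : M →ₗ[R] C 0
  d : ∀ i, C i →ₗ[R] C (i + 1)
  mono : Function.Injective ε
  ex0 : Function.Exact ε (d 0)
  ex : ∀ i, Function.Exact (d i) (d (i + 1))
  bounded : ∀ i, n < i → Subsingleton (C i)

/-- The injective dimension of `M` is at most `n`. -/
def InjDimLE (R : Type v) (M : Type w) [Ring R] [AddCommGroup M] [Module R M] (n : ℕ) : Prop :=
  Nonempty (InjCoresWitness R M n)

/-- `A` is an `m`-Gorenstein algebra: the regular module has injective dimension at
most `m` on both sides. -/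
def IsGorensteinAlg (A : Type v) [Ring A] (m : ℕ) : Prop :=
  InjDimLE A A m ∧ InjDimLE Aᵐᵒᵖ Aᵐᵒᵖ m

/-!
Write `N.HomExtends V` when every linear map `N → V` extends from the submodule `N` to the
ambient module. For an exact complex, exactness of `Hom(-, A)` at a spot says exactly that the
image of the next differential has `HomExtends A`, so total acyclicity amounts to exactness
together with `HomExtends A` for the image of every differential.

Let `PP` be a totally acyclic complex with `M ≅ ker (dd 0)` and `π : P → M` a projective cover.
Lifting `dd (-1)` through `π` gives a surjection `s : PP (-1) → P` which splits, because
`ker π` is superfluous; so `PP (-1) ≅ P ⊕ ker s`. Cancelling the contractible piece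
`ker s → ker s` between degrees `-2` and `-1` and shifting leaves a totally acyclic complex with
`ker π` in degree `0`: `Ω M` is Gorenstein-projective, and every map from `Ω M` to a finitely
generated projective module extends to `P`.

For an endomorphism `f` of `Ω M`, extend it to `P` and pass to `M`. By Fitting's lemma the
induced endomorphism `h` of the indecomposable `M`, or `1 - h`, is bijective; superfluity of
`ker π` then makes the extension surjective, hence bijective, so `f` or `1 - f` is injective and
`Ω M` is indecomposable. If `Ω M` were projective, the identity of `Ω M` would extend to a
retraction `P → Ω M`, whose kernel together with `ker π` spans `P`; so `Ω M = 0` and `M ≅ P`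
would be projective.
-/

open Function LinearMap

section Generalities

variable {A : Type*} [Ring A] {X Y Z V : Type*} [AddCommGroup X] [Module A X]
  [AddCommGroup Y] [Module A Y] [AddCommGroup Z] [Module A Z] [AddCommGroup V] [Module A V]

theorem LinearMap.exists_comp_eq_of_ker_le {f : Y →ₗ[A] Z} (hf : Surjective f) {g : Y →ₗ[A] X}
    (hfg : ker f ≤ ker g) : ∃ g' : Z →ₗ[A] X, g' ∘ₗ f = g :=
  ⟨(ker f).liftQ g hfg ∘ₗ (f.quotKerEquivOfSurjective hf).symm.toLinearMap, by ext; simp⟩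

theorem LinearMap.exists_retraction_ker [Module.Projective A Z] {q : Y →ₗ[A] Z}
    (hq : Surjective q) : ∃ r : Y →ₗ[A] ker q, r ∘ₗ (ker q).subtype = LinearMap.id := by
  obtain ⟨σ, hσ⟩ := Module.projective_lifting_property q LinearMap.id hq
  have hmem : ∀ y, (LinearMap.id - σ ∘ₗ q : Y →ₗ[A] Y) y ∈ ker q := fun y => by
    simp [← LinearMap.comp_apply q σ, hσ]
  refine ⟨codRestrict _ _ hmem, ?_⟩
  ext ⟨y, hy⟩
  simp [mem_ker.mp hy]

theorem Module.Projective.ker_of_surjective [Module.Projective A Y] [Module.Projective A Z]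
    {q : Y →ₗ[A] Z} (hq : Surjective q) : Module.Projective A (ker q) :=
  let ⟨r, hr⟩ := exists_retraction_ker hq
  .of_split (ker q).subtype r hr

def Submodule.HomExtends (V : Type*) [AddCommGroup V] [Module A V] (N : Submodule A Z) : Prop :=
  ∀ φ : N →ₗ[A] V, ∃ ψ : Z →ₗ[A] V, ψ ∘ₗ N.subtype = φ

namespace Submodule.HomExtends

theorem of_retract {N : Submodule A Y} {N' : Submodule A Z} (h : N.HomExtends V)
    {s : Y →ₗ[A] Z} {t : Z →ₗ[A] Y} (hst : ∀ z, s (t z) = z) (hs : ∀ y ∈ N, s y ∈ N')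
    (ht : ∀ z ∈ N', t z ∈ N) : N'.HomExtends V := by
  intro φ
  obtain ⟨ψ, hψ⟩ := h (φ ∘ₗ s.restrict hs)
  refine ⟨ψ ∘ₗ t, ?_⟩
  ext ⟨z, hz⟩
  simpa [restrict_apply, hst] using LinearMap.congr_fun hψ ⟨t z, ht z hz⟩

theorem of_projective [Module.Projective A V] [Module.Finite A V] {N : Submodule A Z}
    (h : N.HomExtends A) : N.HomExtends V := by
  intro φ
  obtain ⟨n, p, hp⟩ := Module.Finite.exists_fin' A V
  obtain ⟨ι, hι⟩ := Module.projective_lifting_property p LinearMap.id hp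
  choose ψ hψ using fun j : Fin n => h (LinearMap.proj j ∘ₗ ι ∘ₗ φ)
  refine ⟨p ∘ₗ LinearMap.pi ψ, ?_⟩
  ext x
  have hx : LinearMap.pi ψ (x : Z) = ι (φ x) := funext fun j => LinearMap.congr_fun (hψ j) x
  simpa [hx] using LinearMap.congr_fun hι (φ x)

end Submodule.HomExtends

theorem Function.Exact.exact_dual_iff_homExtends {f : X →ₗ[A] Y} {g : Y →ₗ[A] Z}
    (hfg : Exact f g) :
    Exact (fun ψ : Z →ₗ[A] A => ψ ∘ₗ g) (fun χ : Y →ₗ[A] A => χ ∘ₗ f) ↔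
      (range g).HomExtends A := by
  refine ⟨fun hdual φ => ?_, fun hext χ => ⟨fun hχ => ?_, ?_⟩⟩
  · obtain ⟨ψ, hψ⟩ := (hdual (φ ∘ₗ g.rangeRestrict)).mp <| by
      ext x
      simp [show g.rangeRestrict (f x) = 0 from Subtype.ext (hfg.apply_apply_eq_zero x)]
    refine ⟨ψ, ?_⟩
    ext ⟨_, x, rfl⟩
    exact LinearMap.congr_fun hψ x
  · obtain ⟨φ, hφ⟩ := exists_comp_eq_of_ker_le g.surjective_rangeRestrict (g := χ) <| by
      rw [ker_rangeRestrict, hfg.linearMap_ker_eq]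
      rintro _ ⟨x, rfl⟩
      exact LinearMap.congr_fun hχ x
    obtain ⟨ψ, hψ⟩ := hext φ
    exact ⟨ψ, by rw [← hφ, ← hψ]; rfl⟩
  · rintro ⟨ψ, rfl⟩
    ext x
    simp [hfg.apply_apply_eq_zero]

end Generalities

namespace IsIndecomposable

variable {A : Type v} [Ring A] {M : Type w} [AddCommGroup M] [Module A M]

theorem bijective_or_bijective_one_sub [IsArtinian A M] [IsNoetherian A M]
    (hM : IsIndecomposable A M) (h : Module.End A M) : Bijective h ∨ Bijective ⇑(1 - h) := by
  obtain ⟨n, hn, hn1⟩ :=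
    (h.eventually_isCompl_ker_pow_range_pow.and (Filter.eventually_ge_atTop 1)).exists
  rcases hM.2 _ _ hn with hker | hrange
  · exact .inl <| IsArtinian.bijective_of_injective_endomorphism h <|
      Module.End.injective_of_iterate_injective (by omega) (ker_eq_bot.mp hker)
  · exact .inr <| (Module.End.isUnit_iff _).mp <|
      IsNilpotent.isUnit_one_sub ⟨n, range_eq_bot.mp hrange⟩

theorem of_injective_or_injective_one_sub [Nontrivial M]
    (h : ∀ f : Module.End A M, Injective f ∨ Injective ⇑(1 - f)) : IsIndecomposable A M := by
  refine ⟨exists_ne 0, fun N N' hc => ?_⟩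
  rcases h (N.projection N' hc) with hinj | hinj
  · rw [← Submodule.ker_projection hc, ker_eq_bot.mpr hinj]
    exact .inr rfl
  · rw [Module.End.one_eq_id, ← Submodule.projection_eq_id_sub_projection hc] at hinj
    rw [← Submodule.ker_projection hc.symm, ker_eq_bot.mpr hinj]
    exact .inl rfl

end IsIndecomposable

namespace IsProjectiveCover

variable {A : Type v} [Ring A] {P M : Type w} [AddCommGroup P] [Module A P] [AddCommGroup M]
  [Module A M] {π : P →ₗ[A] M}

theorem surjective_of_surjective_comp (hπ : IsProjectiveCover A π) {Q : Type*} [AddCommGroup Q]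
    [Module A Q] {u : Q →ₗ[A] P} (hu : Surjective (π ∘ₗ u)) : Surjective u := by
  refine range_eq_top.mp (hπ.2.2 _ (eq_top_iff.mpr fun x _ => ?_))
  obtain ⟨y, hy⟩ := hu (π x)
  refine Submodule.mem_sup.mpr ⟨u y, mem_range_self u y, x - u y, ?_, add_sub_cancel _ _⟩
  rw [mem_ker, map_sub, ← LinearMap.comp_apply, hy, sub_self]

theorem finite [Module.Finite A M] (hπ : IsProjectiveCover A π) : Module.Finite A P := by
  obtain ⟨n, p, hp⟩ := Module.Finite.exists_fin' A M
  obtain ⟨u, hu⟩ := Module.projective_lifting_property π p hπ.2.1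
  exact .of_surjective u (hπ.surjective_of_surjective_comp (hu ▸ hp))

theorem exists_split_lift (hπ : IsProjectiveCover A π) {Y : Type*} [AddCommGroup Y]
    [Module A Y] [Module.Projective A Y] {g : Y →ₗ[A] M} (hg : Surjective g) :
    ∃ (s : Y →ₗ[A] P) (t : P →ₗ[A] Y), π ∘ₗ s = g ∧ s ∘ₗ t = LinearMap.id := by
  obtain ⟨s, hs⟩ := Module.projective_lifting_property π g hπ.2.1
  have := hπ.1
  obtain ⟨t, ht⟩ := Module.projective_lifting_property s LinearMap.id
    (hπ.surjective_of_surjective_comp (hs ▸ hg))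
  exact ⟨s, t, hs, ht⟩

theorem ker_eq_bot_of_retraction (hπ : IsProjectiveCover A π) {r : P →ₗ[A] ker π}
    (hr : r ∘ₗ (ker π).subtype = LinearMap.id) : ker π = ⊥ := by
  have hr' : ∀ x : ker π, r x = x := LinearMap.congr_fun hr
  have hker : ker r = ⊤ := hπ.2.2 _ <| eq_top_iff.mpr fun x _ =>
    Submodule.mem_sup.mpr ⟨x - r x, by simp [hr'], r x, (r x).2, sub_add_cancel _ _⟩
  refine eq_bot_iff.mpr fun x hx => ?_
  have : r x = 0 := mem_ker.mp (hker ▸ Submodule.mem_top)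
  rw [hr' ⟨x, hx⟩] at this
  exact congrArg Subtype.val this

theorem projective_of_ker_eq_bot (hπ : IsProjectiveCover A π) (h : ker π = ⊥) :
    Module.Projective A M :=
  have := hπ.1
  .of_equiv' (LinearEquiv.ofBijective π ⟨ker_eq_bot.mp h, hπ.2.1⟩)

theorem injective_of_bijective_of_comp_eq [IsNoetherian A P] (hπ : IsProjectiveCover A π)
    {g : Module.End A P} {h : Module.End A M} {f : Module.End A (ker π)}
    (hgf : g ∘ₗ (ker π).subtype = (ker π).subtype ∘ₗ f) (hhg : h ∘ₗ π = π ∘ₗ g)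
    (hh : Bijective h) : Injective f := by
  have hg : Surjective g := hπ.surjective_of_surjective_comp <| by
    rw [← hhg, coe_comp]
    exact hh.2.comp hπ.2.1
  have hgi := (IsNoetherian.injective_of_surjective_endomorphism g hg).comp
    (ker π).injective_subtype
  rw [← coe_comp, hgf, coe_comp] at hgi
  exact hgi.of_comp

theorem injective_or_injective_one_sub [IsNoetherian A P] [IsArtinian A M] [IsNoetherian A M]
    (hπ : IsProjectiveCover A π) (hM : IsIndecomposable A M) (hext : (ker π).HomExtends P)
    (f : Module.End A (ker π)) : Injective f ∨ Injective ⇑(1 - f) := by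
  obtain ⟨g, hg⟩ := hext ((ker π).subtype ∘ₗ f)
  have hg' : ∀ x : ker π, g x = f x := LinearMap.congr_fun hg
  obtain ⟨h, hh⟩ := exists_comp_eq_of_ker_le hπ.2.1 (g := π ∘ₗ g) fun x hx => by
    simp [hg' ⟨x, hx⟩]
  refine (hM.bijective_or_bijective_one_sub h).imp
    (hπ.injective_of_bijective_of_comp_eq hg hh) (hπ.injective_of_bijective_of_comp_eq
      (g := 1 - g) ?_ ?_)
  · ext x
    simp [hg']
  · ext x
    simpa using LinearMap.congr_fun hh x

end IsProjectiveCover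

attribute [instance] GPWitness.acg GPWitness.mod

section TotallyAcyclic

variable {k : Type u} {A : Type v} [Field k] [Ring A] [Algebra k A] {M : Type w} [AddCommGroup M]
  [Module A M]

theorem GPWitness.homExtends_range (w : GPWitness k A M) (n : ℤ) :
    (range (w.d n)).HomExtends A := by
  obtain ⟨m, rfl⟩ : ∃ m, n = m + 1 := ⟨n - 1, by omega⟩
  exact (w.ex m).exact_dual_iff_homExtends.mp (w.dualEx m)

theorem IsGorensteinProjective.of_homExtends (Q : ℤ → Type w) [∀ n, AddCommGroup (Q n)]
    [∀ n, Module A (Q n)] (proj : ∀ n, Module.Projective A (Q n))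
    (fin : ∀ n, Module.Finite A (Q n)) (d : ∀ n, Q n →ₗ[A] Q (n + 1))
    (hex : ∀ n, Exact (d n) (d (n + 1))) (hext : ∀ n, (range (d n)).HomExtends A)
    (e : M ≃ₗ[A] ker (d 0)) : IsGorensteinProjective k A M :=
  ⟨{ P := Q, proj, fin, d, ex := hex, cocycle := ⟨e⟩
     dualEx := fun n => (hex n).exact_dual_iff_homExtends.mpr (hext (n + 1)) }⟩

end TotallyAcyclic

namespace SyzygyComplex

section

variable {A : Type v} [Ring A] (PP : ℤ → Type w) [∀ n, AddCommGroup (PP n)]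
  [∀ n, Module A (PP n)] (P K : Type w) [AddCommGroup P] [Module A P] [AddCommGroup K]
  [Module A K]

/-- `⋯ → PP (-4) → PP (-3) → K → P → PP 0 → PP 1 → ⋯`, with `P` in degree `0`. -/
abbrev obj : ℤ → Type w
  | .ofNat 0 => P
  | .ofNat (m + 1) => PP (.ofNat m)
  | .negSucc 0 => K
  | .negSucc (m + 1) => PP (.negSucc (m + 2))

instance instAddCommGroup : ∀ n, AddCommGroup (obj PP P K n)
  | .ofNat 0 => inferInstanceAs (AddCommGroup P)
  | .ofNat (m + 1) => inferInstanceAs (AddCommGroup (PP (.ofNat m)))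
  | .negSucc 0 => inferInstanceAs (AddCommGroup K)
  | .negSucc (m + 1) => inferInstanceAs (AddCommGroup (PP (.negSucc (m + 2))))

instance instModule : ∀ n, Module A (obj PP P K n)
  | .ofNat 0 => inferInstanceAs (Module A P)
  | .ofNat (m + 1) => inferInstanceAs (Module A (PP (.ofNat m)))
  | .negSucc 0 => inferInstanceAs (Module A K)
  | .negSucc (m + 1) => inferInstanceAs (Module A (PP (.negSucc (m + 2))))

variable {PP P K}

def d (dd : ∀ n, PP n →ₗ[A] PP (n + 1)) (e₀ : P →ₗ[A] PP 0) (e₁ : K →ₗ[A] P)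
    (e₂ : PP (-3) →ₗ[A] K) : ∀ n, obj PP P K n →ₗ[A] obj PP P K (n + 1)
  | .ofNat 0 => e₀
  | .ofNat (m + 1) => dd (.ofNat m)
  | .negSucc 0 => e₁
  | .negSucc 1 => e₂
  | .negSucc (m + 2) => dd (.negSucc (m + 3))

theorem isGorensteinProjective_ker_of_exact (k : Type u) [Field k] [Algebra k A]
    [∀ n, Module.Projective A (PP n)] [∀ n, Module.Finite A (PP n)] [Module.Projective A P]
    [Module.Finite A P] [Module.Projective A K] [Module.Finite A K]
    {dd : ∀ n, PP n →ₗ[A] PP (n + 1)} {e₀ : P →ₗ[A] PP 0} {e₁ : K →ₗ[A] P}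
    {e₂ : PP (-3) →ₗ[A] K} (hex : ∀ n, Exact (dd n) (dd (n + 1)))
    (hext : ∀ n, (range (dd n)).HomExtends A) (hex₀ : Exact e₀ (dd 0)) (hex₁ : Exact e₁ e₀)
    (hex₂ : Exact e₂ e₁) (hex₃ : Exact (dd (-4)) e₂) (hext₁ : (range e₁).HomExtends A)
    (hext₂ : (range e₂).HomExtends A) : IsGorensteinProjective k A (ker e₀) := by
  have hrange₀ : range e₀ = range (dd (-1)) := hex₀.linearMap_ker_eq.symm.trans
    (show Exact (dd (-1)) (dd 0) from hex (-1)).linearMap_ker_eq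
  refine .of_homExtends (obj PP P K) ?_ ?_ (d dd e₀ e₁ e₂) ?_ ?_ (LinearEquiv.refl A _)
  · rintro ((_ | m) | (_ | m)) <;> infer_instance
  · rintro ((_ | m) | (_ | m)) <;> infer_instance
  · rintro ((_ | m) | (_ | _ | _ | m))
    exacts [hex₀, hex m, hex₁, hex₂, hex₃, hex (.negSucc (m + 4))]
  · rintro ((_ | m) | (_ | _ | m))
    exacts [hrange₀ ▸ hext (-1), hext m, hext₁, hext₂, hext (.negSucc (m + 3))]

end

section

variable {A : Type v} [Ring A] {PP : ℤ → Type w} [∀ n, AddCommGroup (PP n)]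
  [∀ n, Module A (PP n)] {dd : ∀ n, PP n →ₗ[A] PP (n + 1)} {P : Type w} [AddCommGroup P]
  [Module A P] {e : P →ₗ[A] PP 0} {s : PP (-1) →ₗ[A] P} {t : P →ₗ[A] PP (-1)}

/-- When `s ∘ t = id`, `PP (-1) = range t ⊕ ker s`, and this is the part of `PP (-2)` that
`dd (-2)` maps into `range t`. -/
def kerTerm (dd : ∀ n, PP n →ₗ[A] PP (n + 1)) (s : PP (-1) →ₗ[A] P) (t : P →ₗ[A] PP (-1)) :
    Submodule A (PP (-2)) :=
  ker ((LinearMap.id - t ∘ₗ s) ∘ₗ (dd (-2) : PP (-2) →ₗ[A] PP (-1)))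

theorem mem_kerTerm {x : PP (-2)} : x ∈ kerTerm dd s t ↔ dd (-2) x = t (s (dd (-2) x)) := by
  simp [kerTerm, sub_eq_zero]

def dNegOne (dd : ∀ n, PP n →ₗ[A] PP (n + 1)) (s : PP (-1) →ₗ[A] P) (t : P →ₗ[A] PP (-1)) :
    kerTerm dd s t →ₗ[A] P :=
  s ∘ₗ (dd (-2) : PP (-2) →ₗ[A] PP (-1)) ∘ₗ (kerTerm dd s t).subtype

def dNegTwo (hex : ∀ n, Exact (dd n) (dd (n + 1))) (s : PP (-1) →ₗ[A] P)
    (t : P →ₗ[A] PP (-1)) : PP (-3) →ₗ[A] kerTerm dd s t :=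
  codRestrict _ (dd (-3)) fun z => by
    simp [mem_kerTerm, (show Exact (dd (-3)) (dd (-2)) from hex (-3)).apply_apply_eq_zero]

theorem exact_dNegOne (hex : ∀ n, Exact (dd n) (dd (n + 1))) (hst : ∀ x, s (t x) = x)
    (hes : ∀ z, e (s z) = dd (-1) z) : Exact (dNegOne dd s t) e := by
  have hex₂ : Exact (dd (-2)) (dd (-1)) := hex (-2)
  refine fun y => ⟨fun hy => ?_, ?_⟩
  · obtain ⟨x, hx⟩ := (hex₂ (t y)).mp (by rw [← hes, hst, hy])
    exact ⟨⟨x, mem_kerTerm.mpr (by rw [hx, hst])⟩, by simp [dNegOne, hx, hst]⟩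
  · rintro ⟨x, rfl⟩
    simp [dNegOne, hes, hex₂.apply_apply_eq_zero]

theorem exact_dNegTwo (hex : ∀ n, Exact (dd n) (dd (n + 1))) :
    Exact (dNegTwo hex s t) (dNegOne dd s t) := by
  have hex₃ : Exact (dd (-3)) (dd (-2)) := hex (-3)
  rintro ⟨x, hx⟩
  refine ⟨fun h => ?_, ?_⟩
  · have h' : s (dd (-2) x) = 0 := h
    obtain ⟨z, rfl⟩ := (hex₃ x).mp (by rw [mem_kerTerm.mp hx, h', map_zero])
    exact ⟨z, rfl⟩
  · rintro ⟨z, hz⟩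
    rw [← hz]
    simp [dNegOne, dNegTwo, hex₃.apply_apply_eq_zero]

theorem exact_dd_dNegTwo (hex : ∀ n, Exact (dd n) (dd (n + 1))) :
    Exact (dd (-4)) (dNegTwo hex s t) := by
  have hex₄ : Exact (dd (-4)) (dd (-3)) := hex (-4)
  intro z
  simpa [dNegTwo, Subtype.ext_iff] using hex₄ z

theorem exists_retraction_kerTerm [Module.Projective A (PP (-1))] [Module.Projective A P]
    (hex : ∀ n, Exact (dd n) (dd (n + 1))) (hst : ∀ x, s (t x) = x)
    (hes : ∀ z, e (s z) = dd (-1) z) :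
    ∃ r : PP (-2) →ₗ[A] kerTerm dd s t, r ∘ₗ (kerTerm dd s t).subtype = LinearMap.id := by
  have hex₂ : Exact (dd (-2)) (dd (-1)) := hex (-2)
  have : Module.Projective A (ker s) := .ker_of_surjective (q := s) fun x => ⟨t x, hst x⟩
  let q : PP (-2) →ₗ[A] ker s :=
    codRestrict _ ((LinearMap.id - t ∘ₗ s) ∘ₗ (dd (-2) : PP (-2) →ₗ[A] PP (-1))) fun x => by
      simp [hst]
  have hq : Surjective q := by
    rintro ⟨y, hy⟩
    obtain ⟨x, hx⟩ := (hex₂ y).mp (by rw [← hes, mem_ker.mp hy, map_zero])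
    exact ⟨x, Subtype.ext (by simp [q, hx, mem_ker.mp hy])⟩
  have hkerq : ker q = kerTerm dd s t := ker_codRestrict _ _ _
  exact hkerq ▸ exists_retraction_ker hq

theorem homExtends_ker {V : Type*} [AddCommGroup V] [Module A V]
    (hex : ∀ n, Exact (dd n) (dd (n + 1))) (hext : (range (dd (-2))).HomExtends V)
    (hst : ∀ x, s (t x) = x) (hes : ∀ z, e (s z) = dd (-1) z) : (ker e).HomExtends V := by
  have hker : ker (dd (-1)) = range (dd (-2)) :=
    (show Exact (dd (-2)) (dd (-1)) from hex (-2)).linearMap_ker_eq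
  refine (hker ▸ hext).of_retract hst (fun y hy => ?_) (fun z hz => ?_)
  · rw [mem_ker, hes, mem_ker.mp hy]
  · rw [mem_ker, ← hes, hst, mem_ker.mp hz]

theorem homExtends_range_dNegTwo (hex : ∀ n, Exact (dd n) (dd (n + 1)))
    (hext : (range (dd (-3))).HomExtends A) {r : PP (-2) →ₗ[A] kerTerm dd s t}
    (hr : r ∘ₗ (kerTerm dd s t).subtype = LinearMap.id) :
    (range (dNegTwo hex s t)).HomExtends A := by
  refine hext.of_retract (LinearMap.congr_fun hr) ?_ ?_
  · rintro _ ⟨z, rfl⟩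
    exact ⟨z, (LinearMap.congr_fun hr (dNegTwo hex s t z)).symm⟩
  · rintro _ ⟨z, rfl⟩
    exact ⟨z, rfl⟩

theorem isGorensteinProjective_ker (k : Type u) [Field k] [Algebra k A]
    [∀ n, Module.Projective A (PP n)] [∀ n, Module.Finite A (PP n)] [Module.Projective A P]
    [Module.Finite A P] (hex : ∀ n, Exact (dd n) (dd (n + 1)))
    (hext : ∀ n, (range (dd n)).HomExtends A) (he : Exact e (dd 0)) (hst : ∀ x, s (t x) = x)
    (hes : ∀ z, e (s z) = dd (-1) z) : IsGorensteinProjective k A (ker e) := by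
  obtain ⟨r, hr⟩ := exists_retraction_kerTerm hex hst hes
  have : Module.Projective A (kerTerm dd s t) := .of_split _ r hr
  have : Module.Finite A (kerTerm dd s t) :=
    .of_surjective r fun x => ⟨x, LinearMap.congr_fun hr x⟩
  have hrange : range (dNegOne dd s t) = ker e :=
    (exact_dNegOne hex hst hes).linearMap_ker_eq.symm
  refine isGorensteinProjective_ker_of_exact k hex hext he (exact_dNegOne hex hst hes)
    (exact_dNegTwo hex) (exact_dd_dNegTwo hex) ?_ (homExtends_range_dNegTwo hex (hext (-3)) hr)
  exact hrange ▸ homExtends_ker hex (hext (-2)) hst hes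

end

end SyzygyComplex

namespace IsProjectiveCover

variable {k : Type u} {A : Type v} [Field k] [Ring A] [Algebra k A] {P M : Type w}
  [AddCommGroup P] [Module A P] [AddCommGroup M] [Module A M] {π : P →ₗ[A] M}

theorem exists_syzygy_data (hπ : IsProjectiveCover A π) (w : GPWitness k A M) :
    ∃ (e : P →ₗ[A] w.P 0) (s : w.P (-1) →ₗ[A] P) (t : P →ₗ[A] w.P (-1)),
      ker e = ker π ∧ Exact e (w.d 0) ∧ (∀ x, s (t x) = x) ∧ ∀ z, e (s z) = w.d (-1) z := by
  obtain ⟨iso⟩ := w.cocycle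
  have := w.proj (-1)
  have hex : Exact (w.d (-1)) (w.d 0) := w.ex (-1)
  let g : w.P (-1) →ₗ[A] M :=
    iso.symm ∘ₗ codRestrict (ker (w.d 0)) (w.d (-1)) hex.apply_apply_eq_zero
  have hg : Surjective g := iso.symm.surjective.comp fun y =>
    let ⟨z, hz⟩ := (hex y.1).mp y.2
    ⟨z, Subtype.ext hz⟩
  obtain ⟨s, t, hs, hst⟩ := hπ.exists_split_lift hg
  refine ⟨(ker (w.d 0)).subtype ∘ₗ iso.toLinearMap ∘ₗ π, s, t, ?_, fun y => ⟨fun hy => ?_, ?_⟩,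
    LinearMap.congr_fun hst, fun z => ?_⟩
  · rw [ker_comp_of_ker_eq_bot _ (Submodule.ker_subtype _), LinearEquiv.ker_comp]
  · obtain ⟨x, hx⟩ := hπ.2.1 (iso.symm ⟨y, hy⟩)
    exact ⟨x, by simp [hx]⟩
  · rintro ⟨x, rfl⟩
    exact (iso (π x)).2
  · simp [← LinearMap.comp_apply π s, hs, g]
    rfl

theorem homExtends_ker (hπ : IsProjectiveCover A π) (hM : IsGorensteinProjective k A M) :
    (ker π).HomExtends A := by
  obtain ⟨w⟩ := hM
  obtain ⟨e, s, t, hker, -, hst, hes⟩ := hπ.exists_syzygy_data w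
  exact hker ▸ SyzygyComplex.homExtends_ker w.ex (w.homExtends_range (-2)) hst hes

theorem isGorensteinProjective_ker [Module.Finite A M] (hπ : IsProjectiveCover A π)
    (hM : IsGorensteinProjective k A M) : IsGorensteinProjective k A (ker π) := by
  obtain ⟨w⟩ := hM
  have := w.proj
  have := w.fin
  have := hπ.1
  have := hπ.finite
  obtain ⟨e, s, t, hker, he, hst, hes⟩ := hπ.exists_syzygy_data w
  exact hker ▸ SyzygyComplex.isGorensteinProjective_ker k w.ex w.homExtends_range he hst hes

end IsProjectiveCover

/-- Lemma 2.1(1): the syzygy of an indecomposable non-projective Gorenstein-projective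
module is again indecomposable, non-projective and Gorenstein-projective. -/
theorem syzygy_of_indecomposable_gorenstein_projective (k : Type u) (A : Type v) [Field k]
    [Ring A] [Algebra k A] [FiniteDimensional k A]
    (M : Type w) [AddCommGroup M] [Module A M] [Module.Finite A M]
    (hMgp : IsGorensteinProjective k A M) (hMind : IsIndecomposable A M)
    (hMnp : ¬ Module.Projective A M)
    (P : Type w) [AddCommGroup P] [Module A P] (π : P →ₗ[A] M)
    (hπ : IsProjectiveCover A π) :
    IsGorensteinProjective k A (LinearMap.ker π) ∧
      IsIndecomposable A (LinearMap.ker π) ∧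
      ¬ Module.Projective A (LinearMap.ker π) := by
  have : IsNoetherianRing A := isNoetherian_of_tower k inferInstance
  have : IsArtinianRing A := isArtinian_of_tower k inferInstance
  have := hπ.1
  have := hπ.finite
  have hext := hπ.homExtends_ker hMgp
  have hne : ker π ≠ ⊥ := fun h => hMnp (hπ.projective_of_ker_eq_bot h)
  have : Nontrivial (ker π) := Submodule.nontrivial_iff_ne_bot.mpr hne
  refine ⟨hπ.isGorensteinProjective_ker hMgp, .of_injective_or_injective_one_sub
    (hπ.injective_or_injective_one_sub hMind hext.of_projective), fun _ => hne ?_⟩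
  obtain ⟨r, hr⟩ := hext.of_projective (V := ker π) LinearMap.id
  exact hπ.ker_eq_bot_of_retraction hr
end

section
/- Let A = kQ/I be a monomial algebra and p a perfect path. Then the left A-module Ap is Gorenstein-projective and non-projective. -/
universe u v w

/-- A presentation of the `k`-algebra `A` as a monomial algebra `kQ/I` on the quiver
with vertex type `V`: `ι` sends each path of `Q` to its canonical image in `A`
(with `ι (p.comp q) = ι q * ι p`, so that the paper's concatenation `pq`, defined when
`s(p) = t(q)`, corresponds to the product `ι p * ι q`), and `Z p` means `p ∈ I`. -/
structure MonomialPresentation (k : Type u) (A : Type v) (V : Type w)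
    [Field k] [Ring A] [Algebra k A] [Quiver.{w} V] [Fintype V] : Type (max u v w) where
  ι : ∀ {i j : V}, Quiver.Path i j → A
  Z : ∀ {i j : V}, Quiver.Path i j → Prop
  zero_iff : ∀ {i j : V} (p : Quiver.Path i j), ι p = 0 ↔ Z p
  mul_comp : ∀ {i j l : V} (p : Quiver.Path i j) (q : Quiver.Path j l),
    ι (p.comp q) = ι q * ι p
  orth : ∀ i j : V, i ≠ j →
    ι (Quiver.Path.nil : Quiver.Path i i) * ι (Quiver.Path.nil : Quiver.Path j j) = 0
  sum_one : (∑ i : V, ι (Quiver.Path.nil : Quiver.Path i i)) = 1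
  len_two : ∀ {i j : V} (p : Quiver.Path i j), Z p → 2 ≤ p.length
  admissible : ∃ d : ℕ, ∀ {i j : V} (p : Quiver.Path i j), d ≤ p.length → Z p
  z_mul : ∀ {i j l : V} (p : Quiver.Path i j) (q : Quiver.Path j l),
    Z p ∨ Z q → Z (p.comp q)
  indep : LinearIndependent k
    (fun x : {y : Σ i j : V, Quiver.Path i j // ¬ Z y.2.2} => ι x.1.2.2)
  span_top : Submodule.span k
    (Set.range (fun x : Σ i j : V, Quiver.Path i j => ι x.2.2)) = ⊤

/-- The type of paths of a quiver, bundled with their endpoints. -/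
abbrev PathIn (V : Type w) [Quiver.{w} V] : Type w := Σ i j : V, Quiver.Path i j

/-- The type of arrows of a quiver, bundled with their endpoints. -/
abbrev ArrowIn (V : Type w) [Quiver.{w} V] : Type w := Σ i j : V, (i ⟶ j)

/-- `x` is a sub-path of `y`. -/
def IsSubpathIn {V : Type w} [Quiver.{w} V] (x y : PathIn V) : Prop :=
  ∃ (r : Quiver.Path y.1 x.1) (s : Quiver.Path x.2.1 y.2.1),
    y.2.2 = (r.comp x.2.2).comp s

namespace MonomialPresentation

variable {k : Type u} {A : Type v} {V : Type w}
  [Field k] [Ring A] [Algebra k A] [Quiver.{w} V] [Fintype V]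
  (P : MonomialPresentation k A V)

/-- `L(p)`: the right-minimal paths `q` among the nonzero paths with
`s(q) = t(p)` and `qp = 0` in `A`. -/
def LSet {i j : V} (p : Quiver.Path i j) : Set (PathIn V) :=
  {q | ¬ P.Z q.2.2 ∧ q.1 = j ∧ P.ι q.2.2 * P.ι p = 0 ∧
    ¬ ∃ r u : PathIn V, ¬ P.Z r.2.2 ∧ r.1 = j ∧ P.ι r.2.2 * P.ι p = 0 ∧
      1 ≤ u.2.2.length ∧ P.ι q.2.2 = P.ι u.2.2 * P.ι r.2.2}

/-- `R(p)`: the left-minimal paths `q` among the nonzero paths with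
`t(q) = s(p)` and `pq = 0` in `A`. -/
def RSet {i j : V} (p : Quiver.Path i j) : Set (PathIn V) :=
  {q | ¬ P.Z q.2.2 ∧ q.2.1 = i ∧ P.ι p * P.ι q.2.2 = 0 ∧
    ¬ ∃ r u : PathIn V, ¬ P.Z r.2.2 ∧ r.2.1 = i ∧ P.ι p * P.ι r.2.2 = 0 ∧
      1 ≤ u.2.2.length ∧ P.ι q.2.2 = P.ι r.2.2 * P.ι u.2.2}

/-- A perfect pair `(p, q)` of nonzero nontrivial paths with `s(p) = t(q)`:
`pq = 0`, `R(p) = {q}` and `L(q) = {p}`. -/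
def PerfectPair {i j l : V} (p : Quiver.Path i j) (q : Quiver.Path l i) : Prop :=
  1 ≤ p.length ∧ 1 ≤ q.length ∧ ¬ P.Z p ∧ ¬ P.Z q ∧ P.Z (q.comp p) ∧
  (∀ (m : V) (q' : Quiver.Path m i), ¬ P.Z q' → P.Z (q'.comp p) →
    ∃ x : Quiver.Path m l, q' = x.comp q) ∧
  (∀ (m : V) (p' : Quiver.Path i m), ¬ P.Z p' → P.Z (q.comp p') →
    ∃ y : Quiver.Path j m, p' = p.comp y)

/-- The perfect pair relation on bundled paths. -/
def PerfectPairS (x y : PathIn V) : Prop :=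
  ∃ (i j l : V) (p : Quiver.Path i j) (q : Quiver.Path l i),
    x = ⟨i, j, p⟩ ∧ y = ⟨l, i, q⟩ ∧ P.PerfectPair p q

/-- A perfect path: a nonzero path `p` admitting a sequence
`p = p₁, p₂, …, pₙ, pₙ₊₁ = p` in which all consecutive pairs are perfect. -/
def IsPerfectPath (x : PathIn V) : Prop :=
  ∃ (n : ℕ) (c : Fin (n + 2) → PathIn V), c 0 = x ∧ c (Fin.last (n + 1)) = x ∧
    ∀ m : Fin (n + 1), P.PerfectPairS (c m.castSucc) (c m.succ)

/-- `x ∈ F`: `x` is a minimal path contained in the ideal `I`. -/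
def InF (x : PathIn V) : Prop :=
  P.Z x.2.2 ∧ ∀ y : PathIn V, IsSubpathIn y x → y ≠ x → ¬ P.Z y.2.2

/-- The algebra is quadratic monomial: all minimal relations have length two. -/
def Quadratic : Prop := ∀ x : PathIn V, P.InF x → x.2.2.length = 2

/-- The arrow relation of the relation quiver `R_A`: there is an arrow
`α → β` when `t(α) = s(β)` and `βα ∈ F`. -/
def RQ (x y : ArrowIn V) : Prop :=
  ∃ (i j l : V) (α : i ⟶ j) (β : j ⟶ l), x = ⟨i, j, α⟩ ∧ y = ⟨j, l, β⟩ ∧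
    P.InF ⟨i, l, (α.toPath).comp β.toPath⟩

/-- The two vertices of the relation quiver lie in the same connected component. -/
def Conn (x y : ArrowIn V) : Prop :=
  Relation.ReflTransGen (fun a b => P.RQ a b ∨ P.RQ b a) x y

/-- The connected component of `x` in the relation quiver is a basic cycle:
every vertex of the component has a unique successor and a unique predecessor. -/
def InPerfectComponent (x : ArrowIn V) : Prop :=
  ∀ y : ArrowIn V, P.Conn x y → (∃! z, P.RQ y z) ∧ (∃! z, P.RQ z y)

/-- The connected component of `x` in the relation quiver contains no oriented cycle. -/
def InAcyclicComponent (x : ArrowIn V) : Prop :=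
  ∀ y : ArrowIn V, P.Conn x y → ¬ Relation.TransGen P.RQ y y

end MonomialPresentation

/-- The quiver is a basic `n`-cycle. -/
def IsBasicCycleQuiver (V : Type w) [Quiver.{w} V] : Prop :=
  ∃ n : ℕ, 0 < n ∧ ∃ f : V ≃ ZMod n,
    (∀ i j : V, Nonempty (i ⟶ j) ↔ f j = f i + 1) ∧
    (∀ (i j : V) (a b : i ⟶ j), a = b)

/-- The underlying graph of the quiver is connected. -/
def QuiverConnected (V : Type w) [Quiver.{w} V] : Prop :=
  Nonempty V ∧ ∀ i j : V,
    Relation.ReflTransGen (fun a b => Nonempty (a ⟶ b) ∨ Nonempty (b ⟶ a)) i j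

/-- The quiver has no sources. -/
def NoSources (V : Type w) [Quiver.{w} V] : Prop := ∀ j : V, ∃ i : V, Nonempty (i ⟶ j)

/-- The quiver has no sinks. -/
def NoSinks (V : Type w) [Quiver.{w} V] : Prop := ∀ i : V, ∃ j : V, Nonempty (i ⟶ j)

/-!
A perfect path `p` lies on a closed chain of perfect pairs, which unrolls to a sequence
`(p_z)_{z ∈ ℤ}` with `p_{-1} = p` and every `(p_z, p_{z+1})` perfect. A perfect pair `(p, q)`
with `e = e_{s(p)}` is an exact pair: `pq = 0`, the left annihilator of `q` in `Ae` is `Ap` and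
the right annihilator of `p` in `eA` is `qA`. Both are read off the path basis, because
multiplying by a path sends distinct paths it does not kill to distinct paths. Hence right
multiplication by the `p_z` gives an exact complex `⋯ → Ae_z → Ae_{z+1} → ⋯` of projectives
whose `Hom(-, A)`-dual `⋯ ← e_zA ← e_{z+1}A ← ⋯` (left multiplication) is exact as well, and
`Ap` is its cocycle in degree `0`.

`Ap` is not projective: with `(q, p)` the perfect pair preceding `p`, a splitting of `A → Ap`
would give `u` with `up = p` and `qu = 0`, so the coefficient of `u` at `e_{s(q)}` would be both
`1` and `0`.
-/

open Submodule

theorem Module.Basis.repr_apply_eq_of_forall_basis {ι κ k M N : Type*}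
    [CommSemiring k] [AddCommMonoid M] [Module k M] [AddCommMonoid N] [Module k N]
    {b : Module.Basis ι k M} {b' : Module.Basis κ k N} {f g : M →ₗ[k] N} {z z' : κ}
    (h : ∀ i, b'.repr (f (b i)) z = b'.repr (g (b i)) z') (m : M) :
    b'.repr (f m) z = b'.repr (g m) z' := by
  have : Finsupp.lapply z ∘ₗ b'.repr.toLinearMap ∘ₗ f =
      Finsupp.lapply z' ∘ₗ b'.repr.toLinearMap ∘ₗ g := b.ext h
  exact congr($this m)

open Fin.CommRing in
theorem exists_int_chain_of_closed_chain {α : Type*} {r : α → α → Prop} {n : ℕ}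
    {c : Fin (n + 2) → α} (hc : c 0 = c (Fin.last (n + 1)))
    (h : ∀ m : Fin (n + 1), r (c m.castSucc) (c m.succ)) (z₀ : ℤ) :
    ∃ π : ℤ → α, π z₀ = c 0 ∧ ∀ z, r (π z) (π (z + 1)) := by
  have step : ∀ m : Fin (n + 1), r (c m.castSucc) (c (m + 1).castSucc) := by
    intro m
    rcases eq_or_ne m (Fin.last n) with rfl | hm
    · rw [Fin.last_add_one, Fin.castSucc_zero, hc, ← Fin.succ_last]
      exact h _
    · convert h m using 2
      ext
      simp [Fin.val_add_one_of_lt (Fin.lt_last_iff_ne_last.mpr hm)]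
  refine ⟨fun z => c (Fin.castSucc ((z - z₀ : ℤ) : Fin (n + 1))), by simp, fun z => ?_⟩
  simpa [show z + 1 - z₀ = z - z₀ + 1 by ring] using step _

section Ring

variable {R : Type*} [Ring R]

theorem mem_span_singleton_iff_mul_eq_self {e x : R} (he : IsIdempotentElem e) :
    x ∈ span R {e} ↔ x * e = x := by
  refine ⟨fun hx => ?_, fun hx => mem_span_singleton.mpr ⟨x, hx⟩⟩
  obtain ⟨y, rfl⟩ := mem_span_singleton.mp hx
  rw [smul_eq_mul, mul_assoc, he.eq]

theorem projective_span_singleton_of_isIdempotentElem {e : R} (he : IsIdempotentElem e) :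
    Module.Projective R (span R {e}) :=
  Module.Projective.of_split (span R {e}).subtype
    ((LinearMap.toSpanSingleton R R e).codRestrict _
      (fun x => smul_mem _ x (mem_span_singleton_self e)))
    (LinearMap.ext fun x => Subtype.ext ((mem_span_singleton_iff_mul_eq_self he).mp x.2))

theorem apply_eq_mul_apply_of_isIdempotentElem {e : R} (he : IsIdempotentElem e)
    (g : span R {e} →ₗ[R] R) (x : span R {e}) :
    g x = x * g ⟨e, mem_span_singleton_self e⟩ := by
  rw [← smul_eq_mul, ← map_smul]
  congr
  exact Subtype.ext ((mem_span_singleton_iff_mul_eq_self he).mp x.2).symm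

theorem exists_mul_eq_self_of_projective_span_singleton {q : R}
    [Module.Projective R (span R {q})] :
    ∃ u : R, u * q = q ∧ ∀ r : R, r * q = 0 → r * u = 0 := by
  let f : R →ₗ[R] span R {q} := (LinearMap.toSpanSingleton R R q).codRestrict _
    (fun r => smul_mem _ r (mem_span_singleton_self q))
  have hf : Function.Surjective f := by
    rintro ⟨a, ha⟩
    obtain ⟨r, rfl⟩ := mem_span_singleton.mp ha
    exact ⟨r, rfl⟩
  obtain ⟨s, hs⟩ := Module.projective_lifting_property f LinearMap.id hf
  have hsq : f (s ⟨q, mem_span_singleton_self q⟩) = ⟨q, _⟩ := LinearMap.congr_fun hs _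
  refine ⟨s ⟨q, mem_span_singleton_self q⟩, congr($hsq.1), fun r hr => ?_⟩
  rw [← smul_eq_mul, ← map_smul]
  convert map_zero s
  exact Subtype.ext hr

/-- Exactness of `0 → Ra → Re → Rb → 0` (right multiplication by `b`) and of its dual
`0 → bR → eR → aR → 0` (left multiplication by `a`). -/
structure IsExactPairAt (e a b : R) : Prop where
  mul_idem : a * e = a
  idem_mul : e * b = b
  mul_eq_zero : a * b = 0
  left_ann : ∀ x : R, x * e = x → x * b = 0 → ∃ y, y * a = x
  right_ann : ∀ x : R, e * x = x → a * x = 0 → ∃ y, b * y = x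

section Zigzag

variable {e c : ℤ → R}

theorem idem_mul_of_forall_isExactPairAt
    (hc : ∀ z, IsExactPairAt (e (z + 1)) (c z) (c (z + 1))) (z : ℤ) : e z * c z = c z := by
  simpa using (hc (z - 1)).idem_mul

variable (hc : ∀ z, IsExactPairAt (e (z + 1)) (c z) (c (z + 1)))

def zigzagMap (z : ℤ) : span R {e z} →ₗ[R] span R {e (z + 1)} :=
  (LinearMap.toSpanSingleton R R (c z)).restrict fun x _ =>
    mem_span_singleton.mpr ⟨x * c z, by rw [smul_eq_mul, mul_assoc, (hc z).mul_idem]; rfl⟩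

theorem zigzagMap_apply (z : ℤ) (x : span R {e z}) : (zigzagMap hc z x : R) = x * c z := rfl

theorem zigzagMap_comp (z : ℤ) : zigzagMap hc (z + 1) ∘ₗ zigzagMap hc z = 0 := by
  ext x
  simp only [LinearMap.comp_apply, zigzagMap_apply, LinearMap.zero_apply, ZeroMemClass.coe_zero]
  rw [mul_assoc, (hc z).mul_eq_zero, mul_zero]

theorem exact_zigzagMap (he : ∀ z, IsIdempotentElem (e z)) (z : ℤ) :
    Function.Exact (zigzagMap hc z) (zigzagMap hc (z + 1)) := by
  intro y
  constructor
  · intro hy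
    obtain ⟨x, hx⟩ := (hc z).left_ann y ((mem_span_singleton_iff_mul_eq_self (he _)).mp y.2)
      congr(($hy : R))
    refine ⟨⟨x * e z, mem_span_singleton.mpr ⟨x, rfl⟩⟩, Subtype.ext ?_⟩
    rw [zigzagMap_apply, mul_assoc, idem_mul_of_forall_isExactPairAt hc, hx]
  · rintro ⟨x, rfl⟩
    exact LinearMap.congr_fun (zigzagMap_comp hc z) x

theorem exact_comp_zigzagMap (he : ∀ z, IsIdempotentElem (e z)) (z : ℤ) :
    Function.Exact (fun f : span R {e (z + 1 + 1)} →ₗ[R] R => f ∘ₗ zigzagMap hc (z + 1))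
      (fun f : span R {e (z + 1)} →ₗ[R] R => f ∘ₗ zigzagMap hc z) := by
  intro g
  constructor
  · intro hg
    have hgx := apply_eq_mul_apply_of_isIdempotentElem (he (z + 1)) g
    set w := g ⟨e (z + 1), mem_span_singleton_self _⟩
    have hcw : c z * w = 0 := by
      have := LinearMap.congr_fun hg ⟨e z, mem_span_singleton_self _⟩
      rwa [LinearMap.comp_apply, hgx, zigzagMap_apply,
        idem_mul_of_forall_isExactPairAt hc] at this
    obtain ⟨y, hy⟩ :=
      (hc z).right_ann w (hgx ⟨e (z + 1), mem_span_singleton_self _⟩).symm hcw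
    refine ⟨LinearMap.toSpanSingleton R R y ∘ₗ (span R {e (z + 1 + 1)}).subtype,
      LinearMap.ext fun x => ?_⟩
    simp only [LinearMap.comp_apply, subtype_apply, LinearMap.toSpanSingleton_apply,
      smul_eq_mul, zigzagMap_apply, hgx, ← hy, mul_assoc]
  · rintro ⟨f, rfl⟩
    change (f ∘ₗ zigzagMap hc (z + 1)) ∘ₗ zigzagMap hc z = 0
    rw [LinearMap.comp_assoc, zigzagMap_comp, LinearMap.comp_zero]

theorem map_subtype_ker_zigzagMap_zero (he : ∀ z, IsIdempotentElem (e z)) :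
    (LinearMap.ker (zigzagMap hc 0)).map (span R {e 0}).subtype = span R {c (-1)} := by
  have h := hc (-1)
  norm_num at h
  ext a
  simp only [mem_map, LinearMap.mem_ker, subtype_apply]
  constructor
  · rintro ⟨y, hy, rfl⟩
    obtain ⟨x, hx⟩ := h.left_ann y ((mem_span_singleton_iff_mul_eq_self (he 0)).mp y.2)
      congr(($hy : R))
    exact mem_span_singleton.mpr ⟨x, hx⟩
  · intro ha
    obtain ⟨x, rfl⟩ := mem_span_singleton.mp ha
    refine ⟨⟨x * c (-1), mem_span_singleton.mpr ⟨x * c (-1), ?_⟩⟩, Subtype.ext ?_, rfl⟩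
    · rw [smul_eq_mul, mul_assoc, h.mul_idem]
    · rw [zigzagMap_apply, mul_assoc, h.mul_eq_zero, mul_zero]
      rfl

end Zigzag

theorem isGorensteinProjective_span_of_isExactPairAt (k : Type*) [Field k] [Algebra k R]
    {e c : ℤ → R} (he : ∀ z, IsIdempotentElem (e z))
    (hc : ∀ z, IsExactPairAt (e (z + 1)) (c z) (c (z + 1))) :
    IsGorensteinProjective k R (span R {c (-1)}) :=
  ⟨{ P := fun z => span R {e z}
     proj := fun z => projective_span_singleton_of_isIdempotentElem (he z)
     fin := fun z => Module.Finite.span_singleton R (e z)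
     d := zigzagMap hc
     ex := exact_zigzagMap hc he
     dualEx := exact_comp_zigzagMap hc he
     cocycle := ⟨((equivMapOfInjective _ Subtype.val_injective _).trans
       (LinearEquiv.ofEq _ _ (map_subtype_ker_zigzagMap_zero hc he))).symm⟩ }⟩

end Ring

theorem PathIn.mk_comp_inj_right {V : Type*} [Quiver V] {l i t m : V} (q : Quiver.Path l i)
    (r : Quiver.Path i t) (y : Quiver.Path i m) :
    (⟨l, t, q.comp r⟩ : PathIn V) = ⟨l, m, q.comp y⟩ ↔
      (⟨i, t, r⟩ : PathIn V) = ⟨i, m, y⟩ := by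
  simp only [Sigma.mk.inj_iff, heq_eq_eq, true_and]
  constructor <;> rintro ⟨rfl, h⟩ <;> simp_all [Quiver.Path.comp_inj_right]

theorem PathIn.mk_comp_inj_left {V : Type*} [Quiver V] {i j t m : V} (p : Quiver.Path i j)
    (r : Quiver.Path t i) (y : Quiver.Path m i) :
    (⟨t, j, r.comp p⟩ : PathIn V) = ⟨m, j, y.comp p⟩ ↔
      (⟨t, i, r⟩ : PathIn V) = ⟨m, i, y⟩ := by
  simp only [Sigma.mk.inj_iff]
  constructor <;> rintro ⟨rfl, h⟩ <;> simp_all [Quiver.Path.comp_inj_left]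

namespace MonomialPresentation

open Quiver

variable {k : Type u} {A : Type v} {V : Type w}
  [Field k] [Ring A] [Algebra k A] [Quiver.{w} V] [Fintype V]
  (P : MonomialPresentation k A V)

def e (i : V) : A := P.ι (Path.nil : Path i i)

theorem isIdempotentElem_e (i : V) : IsIdempotentElem (P.e i) :=
  (P.mul_comp Path.nil Path.nil).symm

theorem ι_mul_e {i j : V} (p : Path i j) : P.ι p * P.e i = P.ι p := by
  rw [e, ← P.mul_comp, Path.nil_comp]

theorem e_mul_ι {i j : V} (p : Path i j) : P.e j * P.ι p = P.ι p :=
  (P.mul_comp p Path.nil).symm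

theorem ι_mul_ι {i j l : V} (p : Path i j) (q : Path l i) :
    P.ι p * P.ι q = P.ι (q.comp p) :=
  (P.mul_comp q p).symm

theorem ι_mul_ι_of_ne {i j l m : V} (p : Path i j) (q : Path l m) (h : i ≠ m) :
    P.ι p * P.ι q = 0 := by
  rw [← P.ι_mul_e p, ← P.e_mul_ι q, mul_assoc, ← mul_assoc (P.e i),
    show P.e i * P.e m = 0 from P.orth i m h, zero_mul, mul_zero]

abbrev NonzeroPath : Type w := {y : PathIn V // ¬ P.Z y.2.2}

noncomputable def pathBasis : Module.Basis P.NonzeroPath k A :=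
  .mk P.indep <| by
    rw [← P.span_top]
    refine span_le.mpr ?_
    rintro _ ⟨y, rfl⟩
    by_cases h : P.Z y.2.2
    · simp [(P.zero_iff _).mpr h]
    · exact subset_span ⟨⟨y, h⟩, rfl⟩

theorem pathBasis_apply (y : P.NonzeroPath) : P.pathBasis y = P.ι y.1.2.2 :=
  Module.Basis.mk_apply _ _ _

open Classical in
theorem pathBasis_repr_ι {i j : V} (p : Path i j) (z : P.NonzeroPath) :
    P.pathBasis.repr (P.ι p) z = if (⟨i, j, p⟩ : PathIn V) = z.1 then 1 else 0 := by
  by_cases hp : P.Z p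
  · rw [(P.zero_iff _).mpr hp, map_zero, Finsupp.zero_apply, if_neg]
    exact fun h => z.2 (h ▸ hp)
  · rw [← P.pathBasis_apply ⟨⟨i, j, p⟩, hp⟩, Module.Basis.repr_self,
      Finsupp.single_apply]
    exact if_congr Subtype.ext_iff rfl rfl

theorem pathBasis_repr_mul_ι_comp {i l m : V} (q : Path l i) (y : Path i m)
    (h : ¬ P.Z (q.comp y)) (a : A) :
    P.pathBasis.repr (a * P.ι q) ⟨⟨l, m, q.comp y⟩, h⟩ =
      P.pathBasis.repr a ⟨⟨i, m, y⟩, fun hy => h (P.z_mul q y (Or.inr hy))⟩ := by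
  classical
  refine Module.Basis.repr_apply_eq_of_forall_basis (b := P.pathBasis)
    (f := LinearMap.mulRight k (P.ι q)) (g := LinearMap.id) (fun r => ?_) a
  obtain ⟨⟨s, t, r⟩, -⟩ := r
  simp only [LinearMap.mulRight_apply, LinearMap.id_apply, pathBasis_apply]
  by_cases hs : s = i
  · subst hs
    rw [ι_mul_ι, pathBasis_repr_ι, pathBasis_repr_ι]
    exact if_congr (PathIn.mk_comp_inj_right q r y) rfl rfl
  · rw [P.ι_mul_ι_of_ne _ _ hs, map_zero, Finsupp.zero_apply, pathBasis_repr_ι, if_neg]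
    exact fun heq => hs (congrArg Sigma.fst heq)

theorem pathBasis_repr_ι_mul_comp {i j m : V} (p : Path i j) (y : Path m i)
    (h : ¬ P.Z (y.comp p)) (a : A) :
    P.pathBasis.repr (P.ι p * a) ⟨⟨m, j, y.comp p⟩, h⟩ =
      P.pathBasis.repr a ⟨⟨m, i, y⟩, fun hy => h (P.z_mul y p (Or.inl hy))⟩ := by
  classical
  refine Module.Basis.repr_apply_eq_of_forall_basis (b := P.pathBasis)
    (f := LinearMap.mulLeft k (P.ι p)) (g := LinearMap.id) (fun r => ?_) a
  obtain ⟨⟨s, t, r⟩, -⟩ := r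
  simp only [LinearMap.mulLeft_apply, LinearMap.id_apply, pathBasis_apply]
  by_cases ht : t = i
  · subst ht
    rw [ι_mul_ι, pathBasis_repr_ι, pathBasis_repr_ι]
    exact if_congr (PathIn.mk_comp_inj_left p r y) rfl rfl
  · rw [P.ι_mul_ι_of_ne _ _ (Ne.symm ht), map_zero, Finsupp.zero_apply, pathBasis_repr_ι,
      if_neg]
    exact fun heq => ht (congrArg (fun x : PathIn V => x.2.1) heq)

theorem pathBasis_repr_mul_e_of_ne {i : V} (a : A) (y : P.NonzeroPath) (hy : y.1.1 ≠ i) :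
    P.pathBasis.repr (a * P.e i) y = 0 := by
  refine Module.Basis.repr_apply_eq_of_forall_basis (b := P.pathBasis)
    (f := LinearMap.mulRight k (P.e i)) (g := 0) (z' := y) (fun r => ?_) a |>.trans (by simp)
  obtain ⟨⟨s, t, r⟩, -⟩ := r
  simp only [LinearMap.mulRight_apply, LinearMap.zero_apply, map_zero, Finsupp.zero_apply,
    pathBasis_apply]
  by_cases hs : s = i
  · subst hs
    rw [ι_mul_e, pathBasis_repr_ι, if_neg]
    exact fun heq => hy (congrArg Sigma.fst heq).symm
  · rw [e, P.ι_mul_ι_of_ne _ _ hs, map_zero, Finsupp.zero_apply]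

theorem pathBasis_repr_e_mul_of_ne {i : V} (a : A) (y : P.NonzeroPath) (hy : y.1.2.1 ≠ i) :
    P.pathBasis.repr (P.e i * a) y = 0 := by
  refine Module.Basis.repr_apply_eq_of_forall_basis (b := P.pathBasis)
    (f := LinearMap.mulLeft k (P.e i)) (g := 0) (z' := y) (fun r => ?_) a |>.trans (by simp)
  obtain ⟨⟨s, t, r⟩, -⟩ := r
  simp only [LinearMap.mulLeft_apply, LinearMap.zero_apply, map_zero, Finsupp.zero_apply,
    pathBasis_apply]
  by_cases ht : t = i
  · subst ht
    rw [e_mul_ι, pathBasis_repr_ι, if_neg]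
    exact fun heq => hy (congrArg (fun x : PathIn V => x.2.1) heq).symm
  · rw [e, P.ι_mul_ι_of_ne _ _ (Ne.symm ht), map_zero, Finsupp.zero_apply]

theorem exists_mul_ι_eq_of_perfectPair {i j l : V} {p : Path i j} {q : Path l i}
    (hpq : P.PerfectPair p q) {a : A} (ha : a * P.e i = a) (h0 : a * P.ι q = 0) :
    ∃ b, b * P.ι p = a := by
  obtain ⟨-, -, -, -, -, -, hfactor⟩ := hpq
  suffices a ∈ span A {P.ι p} from mem_span_singleton.mp this
  have hle : span k (P.pathBasis '' {y | ∃ m, ∃ z : Path j m, y.1 = ⟨i, m, p.comp z⟩}) ≤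
      (span A {P.ι p}).restrictScalars k := by
    rw [span_le]
    rintro _ ⟨y, ⟨m, z, hy⟩, rfl⟩
    rw [pathBasis_apply, hy]
    exact mem_span_singleton.mpr ⟨P.ι z, (P.mul_comp p z).symm⟩
  refine hle (P.pathBasis.mem_span_image.mpr fun y hy => ?_)
  rw [Finset.mem_coe, Finsupp.mem_support_iff] at hy
  obtain ⟨⟨s, t, r⟩, hr⟩ := y
  obtain rfl : s = i := by
    by_contra hs
    exact hy (ha ▸ P.pathBasis_repr_mul_e_of_ne a _ hs)
  by_cases hqr : P.Z (q.comp r)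
  · obtain ⟨z, rfl⟩ := hfactor t r hr hqr
    exact ⟨t, z, rfl⟩
  · have := P.pathBasis_repr_mul_ι_comp q r hqr a
    rw [h0, map_zero, Finsupp.zero_apply] at this
    exact absurd this.symm hy

theorem exists_ι_mul_eq_of_perfectPair {i j l : V} {p : Path i j} {q : Path l i}
    (hpq : P.PerfectPair p q) {a : A} (ha : P.e i * a = a) (h0 : P.ι p * a = 0) :
    ∃ b, P.ι q * b = a := by
  obtain ⟨-, -, -, -, -, hfactor, -⟩ := hpq
  suffices a ∈ LinearMap.range (LinearMap.mulLeft k (P.ι q)) from this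
  have hle : span k (P.pathBasis '' {y | ∃ m, ∃ x : Path m l, y.1 = ⟨m, i, x.comp q⟩}) ≤
      LinearMap.range (LinearMap.mulLeft k (P.ι q)) := by
    rw [span_le]
    rintro _ ⟨y, ⟨m, x, hy⟩, rfl⟩
    rw [pathBasis_apply, hy]
    exact ⟨P.ι x, (P.mul_comp x q).symm⟩
  refine hle (P.pathBasis.mem_span_image.mpr fun y hy => ?_)
  rw [Finset.mem_coe, Finsupp.mem_support_iff] at hy
  obtain ⟨⟨s, t, r⟩, hr⟩ := y
  obtain rfl : t = i := by
    by_contra ht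
    exact hy (ha ▸ P.pathBasis_repr_e_mul_of_ne a _ ht)
  by_cases hrp : P.Z (r.comp p)
  · obtain ⟨x, rfl⟩ := hfactor s r hr hrp
    exact ⟨s, x, rfl⟩
  · have := P.pathBasis_repr_ι_mul_comp p r hrp a
    rw [h0, map_zero, Finsupp.zero_apply] at this
    exact absurd this.symm hy

theorem isExactPairAt_of_perfectPair {i j l : V} {p : Path i j} {q : Path l i}
    (hpq : P.PerfectPair p q) : IsExactPairAt (P.e i) (P.ι p) (P.ι q) where
  mul_idem := P.ι_mul_e p
  idem_mul := P.e_mul_ι q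
  mul_eq_zero := by rw [ι_mul_ι, P.zero_iff]; exact hpq.2.2.2.2.1
  left_ann _ := P.exists_mul_ι_eq_of_perfectPair hpq
  right_ann _ := P.exists_ι_mul_eq_of_perfectPair hpq

theorem not_projective_span_ι {i j l : V} (p : Path i j) (q : Path l i) (hp : ¬ P.Z p)
    (hq : ¬ P.Z q) (hqp : P.Z (q.comp p)) : ¬ Module.Projective A (span A {P.ι q}) := by
  intro _
  obtain ⟨u, huq, hann⟩ := exists_mul_eq_self_of_projective_span_singleton (q := P.ι q)
  have hpu : P.ι p * u = 0 := hann _ (by rw [ι_mul_ι, P.zero_iff]; exact hqp)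
  have h1 := P.pathBasis_repr_mul_ι_comp q Path.nil hq u
  have h0 := P.pathBasis_repr_ι_mul_comp p Path.nil (by rwa [Path.nil_comp]) u
  simp only [huq, pathBasis_repr_ι, Path.comp_nil, if_true] at h1
  rw [hpu, map_zero, Finsupp.zero_apply] at h0
  exact one_ne_zero (h1.trans h0.symm)

theorem isExactPairAt_of_perfectPairS {x y : PathIn V} (h : P.PerfectPairS x y) :
    IsExactPairAt (P.e y.2.1) (P.ι x.2.2) (P.ι y.2.2) := by
  obtain ⟨i, j, l, p, q, rfl, rfl, hpq⟩ := h
  exact P.isExactPairAt_of_perfectPair hpq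

theorem not_projective_span_ι_of_perfectPairS {x y : PathIn V} (h : P.PerfectPairS x y) :
    ¬ Module.Projective A (span A {P.ι y.2.2}) := by
  obtain ⟨i, j, l, p, q, rfl, rfl, -, -, hp, hq, hqp, -⟩ := h
  exact P.not_projective_span_ι p q hp hq hqp

end MonomialPresentation

open MonomialPresentation in
theorem cyclic_module_of_perfect_path_is_gorenstein_projective_general
    (k : Type u) (A : Type v) (V : Type w)
    [Field k] [Ring A] [Algebra k A] [Quiver.{w} V] [Fintype V]
    (P : MonomialPresentation k A V) (x : PathIn V) (hx : P.IsPerfectPath x) :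
    IsGorensteinProjective k A (Submodule.span A {P.ι x.2.2}) ∧
      ¬ Module.Projective A (Submodule.span A {P.ι x.2.2}) := by
  obtain ⟨n, c, rfl, hlast, hc⟩ := hx
  obtain ⟨π, hπ, hchain⟩ := exists_int_chain_of_closed_chain hlast.symm hc (-1)
  rw [← hπ]
  have hpair : P.PerfectPairS (π (-2)) (π (-1)) := hchain (-2)
  exact ⟨isGorensteinProjective_span_of_isExactPairAt k (c := fun z => P.ι (π z).2.2)
      (fun z => P.isIdempotentElem_e (π z).2.1)
      (fun z => P.isExactPairAt_of_perfectPairS (hchain z)),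
    P.not_projective_span_ι_of_perfectPairS hpair⟩

open MonomialPresentation in
/-- Proposition 4.3(4): for a perfect path `p` in a monomial algebra `A`, the cyclic
module `Ap` is non-projective and Gorenstein-projective. -/
theorem cyclic_module_of_perfect_path_is_gorenstein_projective
    (k : Type u) (A : Type v) (V : Type w)
    [Field k] [Ring A] [Algebra k A] [FiniteDimensional k A] [Quiver.{w} V] [Fintype V]
    (P : MonomialPresentation k A V) (x : PathIn V) (hx : P.IsPerfectPath x) :
    IsGorensteinProjective k A (Submodule.span A {P.ι x.2.2}) ∧
      ¬ Module.Projective A (Submodule.span A {P.ι x.2.2}) :=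
  cyclic_module_of_perfect_path_is_gorenstein_projective_general k A V P x hx
end
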